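/- arXiv:2305.03158 — 2 statements merged into one kernel-verified Lean document; each statement's English description precedes it below -/
import Mathlib

section
/- Let Λ : ℝ → ℝ be twice differentiable on [0,1] with |Λ''(u)| ≤ C on [0,1], and set Z = ∫₀^1 Λ(s) ds. Let U₁, …, Uₙ be i.i.d. Uniform(0,1) with order statistics U₍₁₎ ≤ ⋯ ≤ U₍ₙ₎, U₍₀₎ = 0, U₍ₙ₊₁₎ = 1, and let Ẑ_QIS = (1/2)·Σ_{i=1}^{n+1} (U₍ᵢ₎ − U₍ᵢ₋₁₎)·(Λ(U₍ᵢ₋₁₎) + Λ(U₍ᵢ₎)). Then E[(Z − Ẑ_QIS)²] ≤ C²·(n+20) / (4·(n+2)(n+3)(n+4)(n+5)(n+6)). -/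
open MeasureTheory


open MeasureTheory

/-- The augmented order statistics of `u : Fin n → ℝ`:
`orderStatAug n u i = U₍ᵢ₎` for `1 ≤ i ≤ n` (the `i`-th smallest value,
obtained by sorting), with the convention `U₍₀₎ = 0` and `U₍ₙ₊₁₎ = 1`. -/
noncomputable def orderStatAug (n : ℕ) (u : Fin n → ℝ) : ℕ → ℝ := fun i =>
  if i = 0 then 0
  else if i = n + 1 then 1
  else ((List.ofFn u).mergeSort (fun a b => a ≤ b)).getD (i - 1) 0

/-- The spacings `Z_i = U₍ᵢ₎ − U₍ᵢ₋₁₎` of the augmented order statistics. -/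
noncomputable def spacing (n : ℕ) (u : Fin n → ℝ) (i : ℕ) : ℝ :=
  orderStatAug n u i - orderStatAug n u (i - 1)

/-- The joint law of `n` i.i.d. `Uniform(0,1)` random variables: the product
of Lebesgue measures on `[0,1]ⁿ`. -/
noncomputable def iidUniform (n : ℕ) : Measure (Fin n → ℝ) :=
  Measure.pi fun _ : Fin n => volume.restrict (Set.Icc (0:ℝ) 1)

/-- The quantile importance sampling (QIS, trapezoid) estimator
`Ẑ_QIS = (1/2)·Σ_{i=1}^{n+1} (U₍ᵢ₎ − U₍ᵢ₋₁₎)·(Λ(U₍ᵢ₋₁₎) + Λ(U₍ᵢ₎))`. -/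
noncomputable def qis (Λ : ℝ → ℝ) (n : ℕ) (u : Fin n → ℝ) : ℝ :=
  (1 / 2) * ∑ i ∈ Finset.range (n + 1),
    (orderStatAug n u (i + 1) - orderStatAug n u i)
      * (Λ (orderStatAug n u i) + Λ (orderStatAug n u (i + 1)))

/-!
On each spacing `[U₍ᵢ₎, U₍ᵢ₊₁₎]` of length `Dᵢ` the trapezoid rule errs by at most `C Dᵢ³ / 12`,
so `(Z - Ẑ_QIS)² ≤ (C/12)² (∑ Dᵢ³)²`. The spacings `D₀, …, Dₙ` of `n` uniform order statistics
are Dirichlet(1, …, 1): integrating out the largest coordinate of a sorted tuple is a Beta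
integral, and induction on `n` gives `∫_{x monotone} ∏ Dᵢ ^ aᵢ = ∏ aᵢ! / (n + ∑ aᵢ)!`. Expanding
the square, `E (∑ Dᵢ³)² = n! (n + 1)(36 n + 720) / (n + 6)!`, which is the claimed bound times
`(12 / C)²`.
-/

open Finset Set
open scoped Nat

section Trapezoid

variable {f f' f'' : ℝ → ℝ} {a b C : ℝ}

theorem abs_trapezoidal_error_le_of_hasDerivWithinAt (hab : a ≤ b)
    (hf : ∀ x ∈ Icc a b, HasDerivWithinAt f (f' x) (Icc a b) x)
    (hf' : ∀ x ∈ Icc a b, HasDerivWithinAt f' (f'' x) (Icc a b) x)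
    (hC : ∀ x ∈ Icc a b, |f'' x| ≤ C) {N : ℕ} (hN : 0 < N) :
    |trapezoidal_error f N a b| ≤ (b - a) ^ 3 * C / (12 * N ^ 2) := by
  rcases hab.eq_or_lt with rfl | hlt
  · simp
  have hderiv : EqOn (derivWithin f (Icc a b)) f' (Icc a b) := fun x hx =>
    (hf x hx).derivWithin (uniqueDiffOn_Icc hlt x hx)
  have hbound : ∀ x, |iteratedDerivWithin 2 f (Icc a b) x| ≤ C := fun x => by
    rw [iteratedDerivWithin_eq_iterate]
    by_cases hx : x ∈ Icc a b
    · rw [Function.iterate_succ_apply', Function.iterate_one,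
        derivWithin_congr hderiv (hderiv hx),
        (hf' x hx).derivWithin (uniqueDiffOn_Icc hlt x hx)]
      exact hC x hx
    · simpa [derivWithin_zero_of_notMem_closure, closure_Icc, hx] using
        (abs_nonneg _).trans (hC a (left_mem_Icc.2 hab))
  rw [← uIcc_of_le hab] at hf hf' hderiv hbound
  refine (trapezoidal_error_le (fun x hx => (hf x hx).differentiableWithinAt)
    (fun x hx => (hf' x hx).differentiableWithinAt.congr hderiv (hderiv hx)) hbound hN).trans_eq ?_
  rw [abs_of_nonneg (sub_nonneg.2 hab)]

theorem abs_sum_trapezoidal_integral_sub_integral_le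
    (hf : ∀ x ∈ Icc a b, HasDerivWithinAt f (f' x) (Icc a b) x)
    (hf' : ∀ x ∈ Icc a b, HasDerivWithinAt f' (f'' x) (Icc a b) x)
    (hC : ∀ x ∈ Icc a b, |f'' x| ≤ C) {p : ℕ → ℝ} (hp : Monotone p)
    (hpab : ∀ i, p i ∈ Icc a b) (N : ℕ) :
    |∑ i ∈ range N, trapezoidal_integral f 1 (p i) (p (i + 1)) - ∫ x in p 0..p N, f x|
      ≤ C / 12 * ∑ i ∈ range N, (p (i + 1) - p i) ^ 3 := by
  have hsub : ∀ i, Icc (p i) (p (i + 1)) ⊆ Icc a b := fun i =>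
    Icc_subset_Icc (hpab i).1 (hpab (i + 1)).2
  have hcont : ContinuousOn f (Icc a b) := fun x hx => (hf x hx).continuousWithinAt
  rw [← intervalIntegral.sum_integral_adjacent_intervals fun i _ =>
      (hcont.mono (uIcc_of_le (hp i.le_succ) ▸ hsub i)).intervalIntegrable,
    ← sum_sub_distrib, mul_sum]
  refine (abs_sum_le_sum_abs _ _).trans (sum_le_sum fun i _ => ?_)
  have := abs_trapezoidal_error_le_of_hasDerivWithinAt (hp i.le_succ)
    (fun x hx => (hf x (hsub i hx)).mono (hsub i))
    (fun x hx => (hf' x (hsub i hx)).mono (hsub i)) (fun x hx => hC x (hsub i hx)) one_pos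
  rw [trapezoidal_error] at this
  exact this.trans_eq (by ring)

end Trapezoid

section Augment

variable {n : ℕ}

def augment (x : Fin n → ℝ) : ℕ → ℝ
  | 0 => 0
  | i + 1 => if h : i < n then x ⟨i, h⟩ else 1

def gap (x : Fin n → ℝ) (i : ℕ) : ℝ := augment x (i + 1) - augment x i

@[simp] lemma augment_zero (x : Fin n → ℝ) : augment x 0 = 0 := rfl

@[simp] lemma augment_succ_self (x : Fin n → ℝ) : augment x (n + 1) = 1 := by
  simp [augment]

lemma augment_mem_Icc {x : Fin n → ℝ} (hx : ∀ j, x j ∈ Icc (0 : ℝ) 1) (i : ℕ) :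
    augment x i ∈ Icc (0 : ℝ) 1 := by
  rcases i with _ | i
  · simp
  · simp only [augment]
    split_ifs
    exacts [hx _, right_mem_Icc.2 zero_le_one]

lemma monotone_augment {x : Fin n → ℝ} (hm : Monotone x) (hx : ∀ j, x j ∈ Icc (0 : ℝ) 1) :
    Monotone (augment x) := by
  refine monotone_nat_of_le_succ fun i => ?_
  rcases i with _ | i
  · exact (augment_mem_Icc hx 1).1
  · simp only [augment]
    split_ifs
    · exact hm (Fin.mk_le_mk.2 i.le_succ)
    · exact (hx _).2
    · omega
    · rfl

lemma abs_gap_le_one {x : Fin n → ℝ} (hx : ∀ j, x j ∈ Icc (0 : ℝ) 1) (i : ℕ) : |gap x i| ≤ 1 :=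
  sub_zero (1 : ℝ) ▸ abs_sub_le_of_le_of_le (augment_mem_Icc hx _).1 (augment_mem_Icc hx _).2
    (augment_mem_Icc hx _).1 (augment_mem_Icc hx _).2

lemma measurable_augment (i : ℕ) : Measurable fun x : Fin n → ℝ => augment x i := by
  rcases i with _ | i
  · exact measurable_const
  · simp only [augment]
    split_ifs
    exacts [measurable_pi_apply _, measurable_const]

lemma augment_snoc_of_le (y : Fin n → ℝ) (t : ℝ) {i : ℕ} (hi : i ≤ n) :
    augment (Fin.snoc y t : Fin (n + 1) → ℝ) i = augment y i := by
  rcases i with _ | i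
  · rfl
  · have : i < n := hi
    simp only [augment, dif_pos this, dif_pos (this.trans n.lt_succ_self)]
    exact Fin.snoc_castSucc (α := fun _ => ℝ) (i := ⟨i, this⟩) ..

@[simp] lemma augment_snoc_succ_self (y : Fin n → ℝ) (t : ℝ) :
    augment (Fin.snoc y t : Fin (n + 1) → ℝ) (n + 1) = t := by
  simp only [augment, dif_pos n.lt_succ_self]
  exact Fin.snoc_last (α := fun _ => ℝ) ..

lemma mergeSort_ofFn (u : Fin n → ℝ) :
    (List.ofFn u).mergeSort (fun a b => a ≤ b) = List.ofFn (u ∘ Tuple.sort u) :=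
  List.Perm.eq_of_sortedLE List.sortedLE_mergeSort (Tuple.monotone_sort u).sortedLE_ofFn
    ((List.mergeSort_perm _ _).trans ((Tuple.sort u).ofFn_comp_perm u).symm)

lemma orderStatAug_eq_augment (u : Fin n → ℝ) {i : ℕ} (hi : i ≤ n + 1) :
    orderStatAug n u i = augment (u ∘ Tuple.sort u) i := by
  rcases i with _ | i
  · rfl
  · rcases (Nat.lt_succ_iff.1 hi).lt_or_eq with h | rfl
    · simp [orderStatAug, augment, h, h.ne, mergeSort_ofFn]
    · simp [orderStatAug, augment]

lemma qis_eq_sum_trapezoidal_integral (Λ : ℝ → ℝ) (u : Fin n → ℝ) :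
    qis Λ n u = ∑ i ∈ range (n + 1), trapezoidal_integral Λ 1
      (augment (u ∘ Tuple.sort u) i) (augment (u ∘ Tuple.sort u) (i + 1)) := by
  rw [qis, mul_sum]
  refine sum_congr rfl fun i hi => ?_
  have hi : i ≤ n := mem_range_succ_iff.1 hi
  rw [trapezoidal_integral_one, orderStatAug_eq_augment u (by omega),
    orderStatAug_eq_augment u (by omega)]
  ring

end Augment

section PiMeasure

variable {α : Type*} [MeasurableSpace α] (μ : Measure α) [SigmaFinite μ]

lemma MeasurableEquiv.piCongrLeft_symm_apply_eq_comp {ι : Type*} (σ : Equiv.Perm ι) (x : ι → α) :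
    MeasurableEquiv.piCongrLeft (fun _ => α) σ.symm x = x ∘ σ := by
  ext i
  rw [MeasurableEquiv.coe_piCongrLeft]
  simpa using (Equiv.piCongrLeft_apply_apply (P := fun _ => α) (e := σ.symm) x (σ i))

variable {ι : Type*} [Fintype ι]

lemma MeasureTheory.Integrable.comp_perm {F : (ι → α) → ℝ}
    (hF : Integrable F (Measure.pi fun _ => μ)) (σ : Equiv.Perm ι) :
    Integrable (fun x => F (x ∘ σ)) (Measure.pi fun _ => μ) := by
  simpa [Function.comp_def, MeasurableEquiv.piCongrLeft_symm_apply_eq_comp] using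
    ((measurePreserving_piCongrLeft (fun _ : ι => μ) σ.symm).integrable_comp_emb
      (MeasurableEquiv.measurableEmbedding _)).2 hF

lemma integral_comp_perm (F : (ι → α) → ℝ) (σ : Equiv.Perm ι) :
    ∫ x, F (x ∘ σ) ∂Measure.pi (fun _ => μ) = ∫ x, F x ∂Measure.pi (fun _ => μ) := by
  simpa [MeasurableEquiv.piCongrLeft_symm_apply_eq_comp] using
    (measurePreserving_piCongrLeft (fun _ : ι => μ) σ.symm).integral_comp' F

lemma integral_sum_comp_perm [DecidableEq ι] {F : (ι → α) → ℝ}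
    (hF : Integrable F (Measure.pi fun _ => μ)) :
    ∫ x, ∑ σ : Equiv.Perm ι, F (x ∘ σ) ∂Measure.pi (fun _ => μ)
      = (Fintype.card ι)! * ∫ x, F x ∂Measure.pi (fun _ => μ) := by
  rw [integral_finsetSum _ fun σ _ => hF.comp_perm μ σ]
  simp [integral_comp_perm, Fintype.card_perm]

lemma integral_pi_fin_succ {n : ℕ} {F : (Fin (n + 1) → α) → ℝ}
    (hF : Integrable F (Measure.pi fun _ => μ)) :
    ∫ x, F x ∂Measure.pi (fun _ => μ)
      = ∫ y, ∫ t, F (Fin.snoc y t) ∂μ ∂Measure.pi (fun _ : Fin n => μ) := by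
  have he := (measurePreserving_piFinSuccAbove (fun _ : Fin (n + 1) => μ) (Fin.last n)).symm
  have hint : Integrable (fun p => F ((MeasurableEquiv.piFinSuccAbove (fun _ => α)
      (Fin.last n)).symm p)) (μ.prod (Measure.pi fun _ => μ)) :=
    (he.integrable_comp_emb (MeasurableEquiv.measurableEmbedding _)).2 hF
  rw [← he.integral_comp', integral_prod_symm _ hint]
  simp [MeasurableEquiv.piFinSuccAbove_symm_apply, Fin.snocEquiv]

end PiMeasure

instance (n : ℕ) : IsProbabilityMeasure (iidUniform n) :=
  have : IsProbabilityMeasure (volume.restrict (Icc (0 : ℝ) 1)) := ⟨by simp⟩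
  Measure.pi.instIsProbabilityMeasure _

lemma ae_mem_Icc_iidUniform (n : ℕ) : ∀ᵐ x ∂iidUniform n, ∀ j, x j ∈ Icc (0 : ℝ) 1 :=
  ae_all_iff.2 fun _ => Measure.tendsto_eval_ae_ae.eventually (ae_restrict_mem measurableSet_Icc)

noncomputable def sqSumGapCubeMonotone (n : ℕ) : (Fin n → ℝ) → ℝ :=
  {x | Monotone x}.indicator fun x => (∑ i ∈ range (n + 1), gap x i ^ 3) ^ 2

section QIS

variable {Λ Λd Λdd : ℝ → ℝ} {C : ℝ} {n : ℕ} {u : Fin n → ℝ}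

lemma abs_integral_sub_qis_le
    (hΛ : ∀ u ∈ Icc (0 : ℝ) 1, HasDerivWithinAt Λ (Λd u) (Icc (0 : ℝ) 1) u)
    (hΛd : ∀ u ∈ Icc (0 : ℝ) 1, HasDerivWithinAt Λd (Λdd u) (Icc (0 : ℝ) 1) u)
    (hC : ∀ u ∈ Icc (0 : ℝ) 1, |Λdd u| ≤ C) (hu : ∀ j, u j ∈ Icc (0 : ℝ) 1) :
    |(∫ s in (0 : ℝ)..1, Λ s) - qis Λ n u|
      ≤ C / 12 * ∑ i ∈ range (n + 1), gap (u ∘ Tuple.sort u) i ^ 3 := by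
  have hx : ∀ j, (u ∘ Tuple.sort u) j ∈ Icc (0 : ℝ) 1 := fun j => hu _
  have := abs_sum_trapezoidal_integral_sub_integral_le hΛ hΛd hC
    (monotone_augment (Tuple.monotone_sort u) hx) (augment_mem_Icc hx) (n + 1)
  rwa [augment_zero, augment_succ_self, ← qis_eq_sum_trapezoidal_integral, abs_sub_comm] at this

/-- Dominating by the sum over all `σ`, instead of using that `u ∘ σ` is monotone for exactly one
`σ` (false for tuples with ties), makes the bound hold for every `u` in the cube. -/
lemma sq_integral_sub_qis_le
    (hΛ : ∀ u ∈ Icc (0 : ℝ) 1, HasDerivWithinAt Λ (Λd u) (Icc (0 : ℝ) 1) u)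
    (hΛd : ∀ u ∈ Icc (0 : ℝ) 1, HasDerivWithinAt Λd (Λdd u) (Icc (0 : ℝ) 1) u)
    (hC : ∀ u ∈ Icc (0 : ℝ) 1, |Λdd u| ≤ C) (hu : ∀ j, u j ∈ Icc (0 : ℝ) 1) :
    ((∫ s in (0 : ℝ)..1, Λ s) - qis Λ n u) ^ 2
      ≤ (C / 12) ^ 2 * ∑ σ : Equiv.Perm (Fin n), sqSumGapCubeMonotone n (u ∘ σ) := by
  have h := abs_le.1 (abs_integral_sub_qis_le hΛ hΛd hC hu)
  calc ((∫ s in (0 : ℝ)..1, Λ s) - qis Λ n u) ^ 2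
      ≤ (C / 12 * ∑ i ∈ range (n + 1), gap (u ∘ Tuple.sort u) i ^ 3) ^ 2 := sq_le_sq' h.1 h.2
    _ = (C / 12) ^ 2 * sqSumGapCubeMonotone n (u ∘ Tuple.sort u) := by
        rw [sqSumGapCubeMonotone, indicator_of_mem (Tuple.monotone_sort u)]
        ring
    _ ≤ (C / 12) ^ 2 * ∑ σ : Equiv.Perm (Fin n), sqSumGapCubeMonotone n (u ∘ σ) :=
        mul_le_mul_of_nonneg_left (single_le_sum (f := fun σ : Equiv.Perm (Fin n) =>
          sqSumGapCubeMonotone n (u ∘ σ)) (fun _ _ => indicator_nonneg (fun _ _ => by positivity) _)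
          (mem_univ _)) (by positivity)

end QIS

section SpacingMonomial

variable {n : ℕ}

def spacingMonomial (a : ℕ → ℕ) (x : Fin n → ℝ) : ℝ := ∏ i ∈ range (n + 1), gap x i ^ a i

lemma spacingMonomial_add (a b : ℕ → ℕ) (x : Fin n → ℝ) :
    spacingMonomial (a + b) x = spacingMonomial a x * spacingMonomial b x := by
  simp only [spacingMonomial, Pi.add_apply, pow_add, prod_mul_distrib]

lemma spacingMonomial_single {i : ℕ} (hi : i ≤ n) (k : ℕ) (x : Fin n → ℝ) :
    spacingMonomial (Pi.single i k) x = gap x i ^ k := by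
  simp [spacingMonomial, Pi.single_apply, pow_ite, hi]

lemma spacingMonomial_eq_prod_mul (a : ℕ → ℕ) (y : Fin n → ℝ) :
    spacingMonomial a y = (∏ i ∈ range n, gap y i ^ a i) * (1 - augment y n) ^ a n := by
  rw [spacingMonomial, prod_range_succ, gap, augment_succ_self]

lemma spacingMonomial_snoc (a : ℕ → ℕ) (y : Fin n → ℝ) (t : ℝ) :
    spacingMonomial a (Fin.snoc y t : Fin (n + 1) → ℝ)
      = (∏ i ∈ range n, gap y i ^ a i) * ((t - augment y n) ^ a n * (1 - t) ^ a (n + 1)) := by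
  rw [spacingMonomial, prod_range_succ, prod_range_succ, mul_assoc]
  congr 1
  · refine prod_congr rfl fun i hi => ?_
    have hi : i < n := mem_range.1 hi
    rw [gap, gap, augment_snoc_of_le y t hi, augment_snoc_of_le y t hi.le]
  · rw [gap, gap, augment_succ_self, augment_snoc_succ_self, augment_snoc_of_le y t le_rfl]

lemma measurable_spacingMonomial (a : ℕ → ℕ) :
    Measurable (spacingMonomial a : (Fin n → ℝ) → ℝ) :=
  Finset.measurable_prod _ fun i _ =>
    ((measurable_augment (i + 1)).sub (measurable_augment i)).pow_const _

lemma integrable_spacingMonomial (a : ℕ → ℕ) :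
    Integrable (spacingMonomial a : (Fin n → ℝ) → ℝ) (iidUniform n) := by
  refine Integrable.of_bound (measurable_spacingMonomial a).aestronglyMeasurable 1 ?_
  filter_upwards [ae_mem_Icc_iidUniform n] with x hx
  rw [Real.norm_eq_abs, spacingMonomial, abs_prod]
  exact prod_le_one (fun _ _ => abs_nonneg _) fun i _ =>
    abs_pow (gap x i) (a i) ▸ pow_le_one₀ (abs_nonneg _) (abs_gap_le_one hx i)

end SpacingMonomial

lemma integral_sub_pow_mul_sub_pow (p q : ℝ) (j k : ℕ) :
    ∫ t in p..q, (t - p) ^ j * (q - t) ^ k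
      = j ! * k ! / (j + k + 1)! * (q - p) ^ (j + k + 1) := by
  induction k generalizing j with
  | zero =>
    simp [intervalIntegral.integral_comp_sub_right fun t => t ^ j, Nat.factorial_succ]
    field_simp
  | succ k ih =>
    have hu (t : ℝ) : HasDerivAt (fun t => (q - t) ^ (k + 1)) (-((k + 1) * (q - t) ^ k)) t := by
      simpa using ((hasDerivAt_id t).const_sub q).fun_pow (k + 1)
    have hv (t : ℝ) : HasDerivAt (fun t => (t - p) ^ (j + 1) / (j + 1)) ((t - p) ^ j) t := by
      refine ((((hasDerivAt_id' t).sub_const p).fun_pow (j + 1)).div_const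
        ((j : ℝ) + 1)).congr_deriv ?_
      push_cast
      field_simp
    have hparts := intervalIntegral.integral_mul_deriv_eq_deriv_mul (a := p) (b := q)
      (fun t _ => hu t) (fun t _ => hv t) ((by fun_prop : Continuous _).intervalIntegrable _ _)
      ((by fun_prop : Continuous _).intervalIntegrable _ _)
    simp only [sub_self, zero_pow (Nat.succ_ne_zero _), zero_div, mul_zero, zero_mul,
      zero_sub] at hparts
    calc ∫ t in p..q, (t - p) ^ j * (q - t) ^ (k + 1)
        = (k + 1) / (j + 1) * ∫ t in p..q, (t - p) ^ (j + 1) * (q - t) ^ k := by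
          rw [← intervalIntegral.integral_const_mul]
          simp_rw [mul_comm ((_ - p) ^ j)]
          rw [hparts, ← intervalIntegral.integral_neg]
          congr 1 with t
          field_simp
      _ = _ := by
          rw [ih, show j + 1 + k + 1 = j + (k + 1) + 1 by ring]
          push_cast [Nat.factorial_succ]
          field_simp

lemma Fin.monotone_snoc_iff {α : Type*} [Preorder α] {n : ℕ} {y : Fin n → α} {t : α} :
    Monotone (Fin.snoc y t : Fin (n + 1) → α) ↔ Monotone y ∧ ∀ j, y j ≤ t := by
  refine ⟨fun h => ⟨fun i j hij => ?_, fun j => ?_⟩, fun ⟨hy, ht⟩ i j hij => ?_⟩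
  · simpa using h (Fin.castSucc_le_castSucc_iff.2 hij)
  · simpa using h (Fin.le_last j.castSucc)
  induction j using Fin.lastCases with
  | last =>
    induction i using Fin.lastCases with
    | last => rfl
    | cast i => simpa using ht i
  | cast j =>
    induction i using Fin.lastCases with
    | last => exact absurd hij (Fin.castSucc_lt_last j).not_ge
    | cast i => simpa using hy (Fin.castSucc_le_castSucc_iff.1 hij)

lemma forall_le_iff_augment_le {n : ℕ} {y : Fin n → ℝ} (hy : Monotone y) {t : ℝ} (ht : 0 ≤ t) :
    (∀ j, y j ≤ t) ↔ augment y n ≤ t := by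
  rcases n with _ | n
  · simpa using ht
  · have : augment y (n + 1) = y (Fin.last n) := by simp [augment, Fin.last]
    rw [this]
    exact ⟨fun h => h _, fun h j => (hy (Fin.le_last j)).trans h⟩

lemma setIntegral_indicator_monotone_snoc {n : ℕ} (a : ℕ → ℕ) {y : Fin n → ℝ}
    (hy : ∀ j, y j ∈ Icc (0 : ℝ) 1) :
    ∫ t in Icc (0 : ℝ) 1,
        {x | Monotone x}.indicator (spacingMonomial a) (Fin.snoc y t : Fin (n + 1) → ℝ)
      = (a n)! * (a (n + 1))! / (a n + a (n + 1) + 1)! *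
        {x | Monotone x}.indicator
          (spacingMonomial (Function.update a n (a n + a (n + 1) + 1))) y := by
  by_cases hmono : Monotone y
  swap
  · have (t : ℝ) : ¬Monotone (Fin.snoc y t : Fin (n + 1) → ℝ) := fun h =>
      hmono (Fin.monotone_snoc_iff.1 h).1
    simp [this, hmono]
  have hc : augment y n ∈ Icc (0 : ℝ) 1 := augment_mem_Icc hy n
  have hprod : ∏ i ∈ range n, gap y i ^ Function.update a n (a n + a (n + 1) + 1) i
      = ∏ i ∈ range n, gap y i ^ a i :=
    prod_congr rfl fun i hi => by rw [Function.update_of_ne (mem_range.1 hi).ne]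
  have hsnoc : ∀ t ∈ Icc (0 : ℝ) 1,
      {x | Monotone x}.indicator (spacingMonomial a) (Fin.snoc y t : Fin (n + 1) → ℝ)
        = (Icc (augment y n) 1).indicator (fun t => (∏ i ∈ range n, gap y i ^ a i) *
            ((t - augment y n) ^ a n * (1 - t) ^ a (n + 1))) t := by
    intro t ht
    have : Monotone (Fin.snoc y t : Fin (n + 1) → ℝ) ↔ t ∈ Icc (augment y n) 1 := by
      rw [Fin.monotone_snoc_iff, forall_le_iff_augment_le hmono ht.1]
      simp [hmono, ht.2]
    simp only [indicator_apply, mem_ofPred_eq, this, spacingMonomial_snoc]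
  rw [setIntegral_congr_fun measurableSet_Icc hsnoc, setIntegral_indicator measurableSet_Icc,
    inter_eq_right.2 (Icc_subset_Icc_left hc.1), integral_Icc_eq_integral_Ioc,
    ← intervalIntegral.integral_of_le hc.2, intervalIntegral.integral_const_mul,
    integral_sub_pow_mul_sub_pow, indicator_of_mem (show y ∈ {x | Monotone x} from hmono),
    spacingMonomial_eq_prod_mul, Function.update_self, hprod]
  ring

theorem setIntegral_monotone_spacingMonomial (n : ℕ) (a : ℕ → ℕ) :
    ∫ x in {x | Monotone x}, spacingMonomial a x ∂iidUniform n
      = (∏ i ∈ range (n + 1), ((a i)! : ℝ)) / (n + ∑ i ∈ range (n + 1), a i)! := by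
  induction n generalizing a with
  | zero =>
    have (x : Fin 0 → ℝ) : Monotone x := fun i => i.elim0
    simp [this, spacingMonomial, gap, Nat.factorial_ne_zero]
  | succ n ih =>
    set a' := Function.update a n (a n + a (n + 1) + 1)
    have hupd (i : ℕ) (hi : i ∈ range n) : a' i = a i :=
      Function.update_of_ne (mem_range.1 hi).ne ..
    have ha'n : a' n = a n + a (n + 1) + 1 := Function.update_self ..
    have hprod : ∏ i ∈ range (n + 1), ((a' i)! : ℝ)
        = (∏ i ∈ range n, ((a i)! : ℝ)) * (a n + a (n + 1) + 1)! := by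
      rw [prod_range_succ, prod_congr rfl fun i hi => by rw [hupd i hi], ha'n]
    have hsum : n + ∑ i ∈ range (n + 1), a' i
        = n + 1 + ∑ i ∈ range (n + 1 + 1), a i := by
      rw [sum_range_succ, sum_congr rfl hupd, ha'n, sum_range_succ, sum_range_succ]
      ring
    calc ∫ x in {x | Monotone x}, spacingMonomial a x ∂iidUniform (n + 1)
        = ∫ y, (∫ t in Icc (0 : ℝ) 1,
            {x | Monotone x}.indicator (spacingMonomial a) (Fin.snoc y t)) ∂iidUniform n := by
          rw [← integral_indicator isClosed_monotone.measurableSet]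
          exact integral_pi_fin_succ _
            ((integrable_spacingMonomial a).indicator isClosed_monotone.measurableSet)
      _ = ∫ y, (a n)! * (a (n + 1))! / (a n + a (n + 1) + 1)! *
            {x | Monotone x}.indicator (spacingMonomial a') y ∂iidUniform n := by
          refine integral_congr_ae ?_
          filter_upwards [ae_mem_Icc_iidUniform n] with y hy
          exact setIntegral_indicator_monotone_snoc a hy
      _ = _ := by
          rw [integral_const_mul, integral_indicator isClosed_monotone.measurableSet, ih, hprod,
            hsum, prod_range_succ, prod_range_succ]
          field_simp

lemma prod_factorial_single {s : Finset ℕ} {i : ℕ} (hi : i ∈ s) (m : ℕ) :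
    ∏ k ∈ s, (((Pi.single i m : ℕ → ℕ) k)! : ℝ) = m ! := by
  rw [prod_eq_single_of_mem i hi fun k _ hk => by simp [hk]]
  simp

lemma prod_factorial_single_add_single {s : Finset ℕ} {i j : ℕ} (hi : i ∈ s) (hj : j ∈ s)
    (k l : ℕ) :
    ∏ m ∈ s, (((Pi.single i k + Pi.single j l : ℕ → ℕ) m)! : ℝ)
      = if i = j then ((k + l)! : ℝ) else k ! * l ! := by
  split_ifs with hij
  · subst hij
    rw [← Pi.single_add, prod_factorial_single hi]
  · have (m : ℕ) : (((Pi.single i k + Pi.single j l : ℕ → ℕ) m)! : ℝ)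
        = ((Pi.single i k : ℕ → ℕ) m)! * ((Pi.single j l : ℕ → ℕ) m)! := by
      by_cases hm : m = i
      · simp [hm, hij]
      · simp [Pi.single_apply, hm]
    rw [prod_congr rfl fun m _ => this m, prod_mul_distrib, prod_factorial_single hi,
      prod_factorial_single hj]

lemma setIntegral_monotone_spacingMonomial_single_add_single {n i j : ℕ} (hi : i ≤ n)
    (hj : j ≤ n) (k l : ℕ) :
    ∫ x in {x | Monotone x}, spacingMonomial (Pi.single i k + Pi.single j l) x ∂iidUniform n
      = (if i = j then ((k + l)! : ℝ) else k ! * l !) / (n + k + l)! := by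
  have hi : i ∈ range (n + 1) := mem_range_succ_iff.2 hi
  have hj : j ∈ range (n + 1) := mem_range_succ_iff.2 hj
  rw [setIntegral_monotone_spacingMonomial, prod_factorial_single_add_single hi hj]
  simp [sum_add_distrib, sum_pi_single', hi, hj, add_assoc]

lemma sq_sum_gap_pow_three {n : ℕ} (x : Fin n → ℝ) :
    (∑ i ∈ range (n + 1), gap x i ^ 3) ^ 2
      = ∑ i ∈ range (n + 1), ∑ j ∈ range (n + 1),
          spacingMonomial (Pi.single i 3 + Pi.single j 3) x := by
  rw [sq, sum_mul_sum]
  refine sum_congr rfl fun i hi => sum_congr rfl fun j hj => ?_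
  rw [spacingMonomial_add, spacingMonomial_single (mem_range_succ_iff.1 hi),
    spacingMonomial_single (mem_range_succ_iff.1 hj)]

lemma integrable_sq_sum_gap_pow_three (n : ℕ) :
    Integrable (fun x : Fin n → ℝ => (∑ i ∈ range (n + 1), gap x i ^ 3) ^ 2) (iidUniform n) := by
  simp_rw [sq_sum_gap_pow_three]
  exact integrable_finsetSum _ fun i _ => integrable_finsetSum _ fun j _ =>
    integrable_spacingMonomial _

theorem setIntegral_monotone_sq_sum_gap_pow_three (n : ℕ) :
    ∫ x in {x | Monotone x}, (∑ i ∈ range (n + 1), gap x i ^ 3) ^ 2 ∂iidUniform n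
      = (n + 1) * (36 * n + 720) / (n + 6)! := by
  have hrow (i : ℕ) (hi : i ∈ range (n + 1)) :
      ∑ j ∈ range (n + 1), (if i = j then ((3 + 3)! : ℝ) else 3 ! * 3 !) / (n + 3 + 3)!
        = (36 * n + 720) / (n + 6)! := by
    have (j : ℕ) :
        (if i = j then ((3 + 3)! : ℝ) else 3 ! * 3 !) = 36 + if i = j then 684 else 0 := by
      split_ifs <;> norm_num [Nat.factorial]
    rw [← sum_div, sum_congr rfl fun j _ => this j, sum_add_distrib, sum_ite_eq, if_pos hi]
    simp
    ring
  have hint (i j : ℕ) : IntegrableOn (spacingMonomial (Pi.single i 3 + Pi.single j 3))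
      {x : Fin n → ℝ | Monotone x} (iidUniform n) :=
    (integrable_spacingMonomial _).integrableOn
  calc ∫ x in {x | Monotone x}, (∑ i ∈ range (n + 1), gap x i ^ 3) ^ 2 ∂iidUniform n
      = ∑ i ∈ range (n + 1), ∑ j ∈ range (n + 1), ∫ x in {x | Monotone x},
          spacingMonomial (Pi.single i 3 + Pi.single j 3) x ∂iidUniform n := by
        simp_rw [sq_sum_gap_pow_three]
        rw [integral_finsetSum _ fun i _ => integrable_finsetSum _ fun j _ => hint i j]
        exact sum_congr rfl fun i _ => integral_finsetSum _ fun j _ => hint i j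
    _ = ∑ i ∈ range (n + 1), (36 * n + 720 : ℝ) / (n + 6)! := by
        refine sum_congr rfl fun i hi => (sum_congr rfl fun j hj => ?_).trans (hrow i hi)
        exact setIntegral_monotone_spacingMonomial_single_add_single
          (mem_range_succ_iff.1 hi) (mem_range_succ_iff.1 hj) 3 3
    _ = _ := by
        simp
        ring

lemma factorial_add_six (n : ℕ) :
    ((n + 6)! : ℝ) = (n + 1) * (n + 2) * (n + 3) * (n + 4) * (n + 5) * (n + 6) * n ! := by
  push_cast [Nat.factorial_succ]
  ring

lemma integrable_sqSumGapCubeMonotone (n : ℕ) :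
    Integrable (sqSumGapCubeMonotone n) (iidUniform n) :=
  (integrable_sq_sum_gap_pow_three n).indicator isClosed_monotone.measurableSet

lemma integral_sum_perm_sqSumGapCubeMonotone (n : ℕ) :
    ∫ u, ∑ σ : Equiv.Perm (Fin n), sqSumGapCubeMonotone n (u ∘ σ) ∂iidUniform n
      = n ! * ((n + 1) * (36 * n + 720) / (n + 6)!) := by
  rw [iidUniform, integral_sum_comp_perm _ (integrable_sqSumGapCubeMonotone n), Fintype.card_fin,
    ← iidUniform, sqSumGapCubeMonotone, integral_indicator isClosed_monotone.measurableSet,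
    setIntegral_monotone_sq_sum_gap_pow_three]

/-- if `Λ` is twice differentiable on `[0,1]` with
`|Λ''| ≤ C` there, `Z = ∫₀^1 Λ`, and `Ẑ_QIS` is the trapezoid estimator
built from the order statistics of `n` i.i.d. `Uniform(0,1)` draws, then
`E[(Z − Ẑ_QIS)²] ≤ C²(n+20)/(4(n+2)(n+3)(n+4)(n+5)(n+6))`. -/
theorem stmt10 (Λ Λd Λdd : ℝ → ℝ) (C : ℝ)
    (hΛ : ∀ u ∈ Set.Icc (0:ℝ) 1, HasDerivWithinAt Λ (Λd u) (Set.Icc (0:ℝ) 1) u)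
    (hΛd : ∀ u ∈ Set.Icc (0:ℝ) 1, HasDerivWithinAt Λd (Λdd u) (Set.Icc (0:ℝ) 1) u)
    (hC : ∀ u ∈ Set.Icc (0:ℝ) 1, |Λdd u| ≤ C)
    (n : ℕ) :
    ∫ u, ((∫ s in (0:ℝ)..1, Λ s) - qis Λ n u) ^ 2 ∂(iidUniform n)
      ≤ C ^ 2 * (n + 20)
          / (4 * (n + 2) * (n + 3) * (n + 4) * (n + 5) * (n + 6)) := by
  calc ∫ u, ((∫ s in (0:ℝ)..1, Λ s) - qis Λ n u) ^ 2 ∂iidUniform n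
      ≤ ∫ u, (C / 12) ^ 2 * ∑ σ : Equiv.Perm (Fin n), sqSumGapCubeMonotone n (u ∘ σ)
          ∂iidUniform n :=
        integral_mono_of_nonneg (ae_of_all _ fun _ => sq_nonneg _)
          ((integrable_finsetSum _ fun σ _ =>
            (integrable_sqSumGapCubeMonotone n).comp_perm _ σ).const_mul _)
          ((ae_mem_Icc_iidUniform n).mono fun _ hu => sq_integral_sub_qis_le hΛ hΛd hC hu)
    _ = (C / 12) ^ 2 * (n ! * ((n + 1) * (36 * n + 720) / (n + 6)!)) := by
        rw [integral_const_mul, integral_sum_perm_sqSumGapCubeMonotone]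
    _ = C ^ 2 * (n + 20) / (4 * (n + 2) * (n + 3) * (n + 4) * (n + 5) * (n + 6)) := by
        rw [factorial_add_six]
        field_simp
        ring
end

section
/- Let d ≥ 1 be an integer and ν, τ > 0. Set a = (ν + d)/2, b = ν/2 + 1, and s = ντ/2. Then ∫_{ℝ^d} (1 + ‖x‖²/ν)^{−(ν+d)/2} · (τ/(2π))^{d/2} · exp(−τ‖x‖²/2) dx = (s^a / Γ(a)) · ∫₀^∞ e^{−s t} t^{a−1} (1 + t)^{b−a−1} dt, i.e. the evidence for a multivariate Student-t likelihood under a multivariate Gaussian prior equals s^a U(a, b, s), where U is Kummer's confluent hypergeometric function of the second kind expressed by its standard integral representation. -/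
/-!
Since `q ^ (-a) = Γ(a)⁻¹ ∫₀^∞ t^{a-1} e^{-qt} dt`, the Student-`t` factor
`(1 + ‖x‖²/ν)^{-a}` is a Gamma mixture of Gaussian kernels: with `s = ντ/2`,
`(1 + ‖x‖²/ν)^{-a} e^{-τ‖x‖²/2} = s^a Γ(a)⁻¹ ∫₀^∞ t^{a-1} e^{-st} e^{-τ(1+t)‖x‖²/2} dt`.
Integrating in `x` first (Fubini, the integrand being nonnegative), the Gaussian of
precision `τ(1+t)`, normalised by the constant of precision `τ`, contributes `(1+t)^{-d/2}`,
which is the factor `(1+t)^{b-a-1}` of Kummer's `U`.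
-/

open MeasureTheory Real Set Module

/-- Kummer's `U(a, b, s)` by its integral representation, which is only meaningful for
`0 < a` and `0 < s`. -/
noncomputable def kummerU (a b s : ℝ) : ℝ :=
  (Gamma a)⁻¹ * ∫ t in Ioi (0 : ℝ), exp (-s * t) * t ^ (a - 1) * (1 + t) ^ (b - a - 1)

theorem integrableOn_kummerU_integrand {a b s : ℝ} (ha : 0 < a) (hs : 0 < s)
    (hb : b ≤ a + 1) :
    IntegrableOn (fun t => exp (-s * t) * t ^ (a - 1) * (1 + t) ^ (b - a - 1)) (Ioi 0) := by
  have hGamma : IntegrableOn (fun t : ℝ => t ^ (a - 1) * exp (-s * t)) (Ioi 0) := by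
    simpa [rpow_one] using
      integrableOn_rpow_mul_exp_neg_mul_rpow (p := 1) (by linarith) one_pos hs
  refine hGamma.mono' (by fun_prop) ?_
  filter_upwards [self_mem_ae_restrict measurableSet_Ioi] with t (ht : 0 < t)
  have h_le_one : (1 + t) ^ (b - a - 1) ≤ 1 :=
    rpow_le_one_of_one_le_of_nonpos (by linarith) (by linarith)
  rw [norm_of_nonneg (by positivity)]
  calc exp (-s * t) * t ^ (a - 1) * (1 + t) ^ (b - a - 1)
      ≤ exp (-s * t) * t ^ (a - 1) * 1 := by gcongr
    _ = t ^ (a - 1) * exp (-s * t) := by ring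

theorem rpow_neg_eq_inv_Gamma_mul_integral {a r : ℝ} (ha : 0 < a) (hr : 0 < r) :
    r ^ (-a) = (Gamma a)⁻¹ * ∫ t in Ioi (0 : ℝ), t ^ (a - 1) * exp (-(r * t)) := by
  rw [integral_rpow_mul_exp_neg_mul_Ioi ha hr, one_div, inv_rpow hr.le, rpow_neg hr.le,
    ← mul_assoc, mul_comm, ← mul_assoc, mul_inv_cancel₀ (Gamma_pos_of_pos ha).ne', one_mul]

theorem one_add_div_rpow_neg_mul_exp_eq_integral {ν τ a y : ℝ} (hν : 0 < ν) (hτ : 0 < τ)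
    (ha : 0 < a) (hy : 0 ≤ y) :
    (1 + y / ν) ^ (-a) * exp (-(τ * y) / 2)
      = (ν * τ / 2) ^ a * (Gamma a)⁻¹ * ∫ t in Ioi (0 : ℝ),
          t ^ (a - 1) * exp (-(ν * τ / 2 * t)) * exp (-(τ * (1 + t) / 2) * y) := by
  have hs : 0 < ν * τ / 2 := by positivity
  have hq : 0 < 1 + y / ν := by positivity
  calc (1 + y / ν) ^ (-a) * exp (-(τ * y) / 2)
      = (ν * τ / 2) ^ a * (ν * τ / 2 * (1 + y / ν)) ^ (-a) * exp (-(τ * y) / 2) := by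
        rw [mul_rpow hs.le hq.le, rpow_neg hs.le,
          mul_inv_cancel_left₀ (rpow_pos_of_pos hs a).ne']
    _ = _ := by
      rw [rpow_neg_eq_inv_Gamma_mul_integral ha (by positivity), mul_assoc, mul_assoc,
        ← integral_mul_const, ← mul_assoc]
      refine congrArg _ <| integral_congr_ae <| .of_forall fun t => ?_
      simp only [mul_assoc, ← exp_add]
      congr 2
      field_simp
      ring

theorem integral_integral_swap_of_nonneg {α β : Type*} [MeasurableSpace α] [MeasurableSpace β]
    {μ : Measure α} {ν : Measure β} [SFinite μ] [SFinite ν] {f : α → β → ℝ}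
    (hf : AEStronglyMeasurable (Function.uncurry f) (μ.prod ν))
    (hf_nonneg : ∀ᵐ y ∂ν, ∀ x, 0 ≤ f x y)
    (hf_int_left : ∀ᵐ y ∂ν, Integrable (fun x => f x y) μ)
    (hf_int : Integrable (fun y => ∫ x, f x y ∂μ) ν) :
    ∫ x, ∫ y, f x y ∂ν ∂μ = ∫ y, ∫ x, f x y ∂μ ∂ν := by
  refine integral_integral_swap ((integrable_prod_iff' hf).2 ⟨hf_int_left, hf_int.congr ?_⟩)
  filter_upwards [hf_nonneg] with y hy
  simp only [Function.uncurry_apply_pair, norm_of_nonneg (hy _)]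

section InnerProductSpace

variable {V : Type*} [NormedAddCommGroup V] [InnerProductSpace ℝ V] [FiniteDimensional ℝ V]
  [MeasurableSpace V] [BorelSpace V]

theorem integrable_exp_neg_mul_sq_norm {b : ℝ} (hb : 0 < b) :
    Integrable (fun x : V => exp (-b * ‖x‖ ^ 2)) :=
  .of_integral_ne_zero <| by
    rw [GaussianFourier.integral_rexp_neg_mul_sq_norm hb]
    positivity

theorem integral_gaussian_normalizer_mul_exp {n : ℕ} (hn : finrank ℝ V = n) {τ c : ℝ}
    (hτ : 0 < τ) (hc : 0 < c) :
    ∫ x : V, (τ / (2 * π)) ^ ((n : ℝ) / 2) * exp (-(τ * c / 2) * ‖x‖ ^ 2)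
      = c ^ (-((n : ℝ) / 2)) := by
  rw [integral_const_mul, GaussianFourier.integral_rexp_neg_mul_sq_norm (by positivity), hn,
    ← mul_rpow (by positivity) (by positivity), rpow_neg hc.le, ← inv_rpow hc.le]
  congr 1
  field_simp

theorem integral_studentT_mul_gaussian {n : ℕ} (hn : finrank ℝ V = n) {ν τ : ℝ}
    (hν : 0 < ν) (hτ : 0 < τ) :
    ∫ x : V, (1 + ‖x‖ ^ 2 / ν) ^ (-((ν + n) / 2)) * (τ / (2 * π)) ^ ((n : ℝ) / 2)
        * exp (-(τ * ‖x‖ ^ 2) / 2)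
      = (ν * τ / 2) ^ ((ν + n) / 2) * kummerU ((ν + n) / 2) (ν / 2 + 1) (ν * τ / 2) := by
  set a := (ν + n) / 2 with ha_def
  set s := ν * τ / 2
  set C := (τ / (2 * π)) ^ ((n : ℝ) / 2)
  have ha : 0 < a := by positivity
  let F : V → ℝ → ℝ := fun x t =>
    t ^ (a - 1) * exp (-(s * t)) * (C * exp (-(τ * (1 + t) / 2) * ‖x‖ ^ 2))
  have h_mixture (x : V) : (1 + ‖x‖ ^ 2 / ν) ^ (-a) * C * exp (-(τ * ‖x‖ ^ 2) / 2)
      = s ^ a * (Gamma a)⁻¹ * ∫ t in Ioi 0, F x t := by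
    rw [mul_right_comm, one_add_div_rpow_neg_mul_exp_eq_integral hν hτ ha (sq_nonneg _),
      mul_assoc, ← integral_mul_const]
    refine congrArg _ <| integral_congr_ae <| .of_forall fun t => ?_
    ring
  have h_gaussian : ∀ t ∈ Ioi (0 : ℝ),
      ∫ x, F x t = exp (-s * t) * t ^ (a - 1) * (1 + t) ^ (ν / 2 + 1 - a - 1) := by
    intro t (ht : 0 < t)
    rw [integral_const_mul, integral_gaussian_normalizer_mul_exp hn hτ (by positivity),
      show ν / 2 + 1 - a - 1 = -((n : ℝ) / 2) by rw [ha_def]; ring, neg_mul]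
    ring
  have h_swap : ∫ x, ∫ t in Ioi 0, F x t = ∫ t in Ioi 0, ∫ x, F x t := by
    have h_pos : ∀ᵐ t ∂(volume.restrict (Ioi (0 : ℝ))), 0 < t :=
      self_mem_ae_restrict measurableSet_Ioi
    refine integral_integral_swap_of_nonneg (by fun_prop) ?_ ?_ ?_
    · filter_upwards [h_pos] with t ht x
      positivity
    · filter_upwards [h_pos] with t ht
      exact ((integrable_exp_neg_mul_sq_norm (by positivity)).const_mul C).const_mul _
    · refine (integrableOn_kummerU_integrand ha (by positivity) ?_).congr_fun
        (fun t ht => (h_gaussian t ht).symm) measurableSet_Ioi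
      rw [ha_def]
      linarith [(n.cast_nonneg : (0 : ℝ) ≤ n)]
  calc _ = ∫ x, s ^ a * (Gamma a)⁻¹ * ∫ t in Ioi 0, F x t :=
        integral_congr_ae (.of_forall h_mixture)
    _ = s ^ a * kummerU a (ν / 2 + 1) s := by
      rw [integral_const_mul, h_swap, setIntegral_congr_fun measurableSet_Ioi h_gaussian, kummerU,
        mul_assoc]

end InnerProductSpace

theorem stmt16_general (d : ℕ) (ν τ : ℝ) (hν : 0 < ν) (hτ : 0 < τ) :
    ∫ x : EuclideanSpace ℝ (Fin d),
        (1 + ‖x‖ ^ 2 / ν) ^ (-((ν + d) / 2))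
          * (τ / (2 * Real.pi)) ^ ((d : ℝ) / 2)
          * Real.exp (-(τ * ‖x‖ ^ 2) / 2)
      = (ν * τ / 2) ^ ((ν + d) / 2) / Real.Gamma ((ν + d) / 2)
          * ∫ t in Set.Ioi (0:ℝ),
              Real.exp (-(ν * τ / 2) * t) * t ^ ((ν + d) / 2 - 1)
                * (1 + t) ^ ((ν / 2 + 1) - (ν + d) / 2 - 1) := by
  rw [integral_studentT_mul_gaussian finrank_euclideanSpace_fin hν hτ, kummerU,
    ← mul_assoc, ← div_eq_mul_inv]

/-- the evidence for a multivariate Student-`t` likelihood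
(`d` dimensions, `ν` degrees of freedom) under a `N(0, τ⁻¹ I_d)` Gaussian
prior equals `s^a · U(a, b, s)` with `a = (ν+d)/2`, `b = ν/2 + 1`,
`s = ντ/2`, where `U` is Kummer's confluent hypergeometric function of the
second kind, expressed through its integral representation
`U(a, b, s) = (1/Γ(a)) ∫₀^∞ e^{−st} t^{a−1} (1+t)^{b−a−1} dt`. -/
theorem stmt16 (d : ℕ) (hd : 1 ≤ d) (ν τ : ℝ) (hν : 0 < ν) (hτ : 0 < τ) :
    ∫ x : EuclideanSpace ℝ (Fin d),
        (1 + ‖x‖ ^ 2 / ν) ^ (-((ν + d) / 2))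
          * (τ / (2 * Real.pi)) ^ ((d : ℝ) / 2)
          * Real.exp (-(τ * ‖x‖ ^ 2) / 2)
      = (ν * τ / 2) ^ ((ν + d) / 2) / Real.Gamma ((ν + d) / 2)
          * ∫ t in Set.Ioi (0:ℝ),
              Real.exp (-(ν * τ / 2) * t) * t ^ ((ν + d) / 2 - 1)
                * (1 + t) ^ ((ν / 2 + 1) - (ν + d) / 2 - 1) :=
  stmt16_general d ν τ hν hτ
end
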